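/- Let G be a perfect group generated by a conjugacy class X. Then the map π × d : Ass(X) → G × ℤ (where π sends g_x to x and d sends g_x to 1) is surjective and its kernel K is contained in the center of Ass(X), i.e., the sequence 1 → K → Ass(X) → G × ℤ → 1 is a central extension. -/

import Mathlib

open Quandles
open scoped commutatorElement

/-- The conjugacy class of `g₀` in `G`, as a set with its conjugation rack structure. -/
def ConjClassOf (G : Type*) [Group G] (g₀ : G) : Type _ := {h : G // IsConj g₀ h}

namespace ConjClassOf

variable {G : Type*} [Group G] {g₀ : G}

instance : Rack (ConjClassOf G g₀) where
  act x y := ⟨x.1 * y.1 * x.1⁻¹, y.2.trans (isConj_iff.mpr ⟨x.1, rfl⟩)⟩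
  self_distrib := by
    intro x y z
    apply Subtype.ext
    simp only []
    group
  invAct x y := ⟨x.1⁻¹ * y.1 * x.1, y.2.trans (isConj_iff.mpr ⟨x.1⁻¹, by group⟩)⟩
  left_inv := by
    intro x y
    apply Subtype.ext
    simp only [Shelf.act]
    group
  right_inv := by
    intro x y
    apply Subtype.ext
    simp only [Shelf.act]
    group

end ConjClassOf

/-- The enveloping group of a rack is generated by the image of the rack. -/
theorem closure_range_toEnvelGroup (R : Type*) [Rack R] :
    Subgroup.closure (Set.range (Rack.toEnvelGroup R)) = ⊤ := by
  rw [eq_top_iff]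
  intro x _
  have : ∀ p : Rack.PreEnvelGroup R,
      (⟦p⟧ : Rack.EnvelGroup R) ∈ Subgroup.closure (Set.range (Rack.toEnvelGroup R)) := by
    intro p
    induction p with
    | unit => exact Subgroup.one_mem (Subgroup.closure (Set.range (Rack.toEnvelGroup R)))
    | incl y => exact Subgroup.subset_closure ⟨y, rfl⟩
    | mul a b ha hb =>
      exact Subgroup.mul_mem (Subgroup.closure (Set.range (Rack.toEnvelGroup R))) ha hb
    | inv a ha => exact Subgroup.inv_mem (Subgroup.closure (Set.range (Rack.toEnvelGroup R))) ha
  exact Quotient.inductionOn x this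

/-- Let `G` be a perfect group generated by a conjugacy class `X`. The map
`π × d : Ass(X) → G × ℤ` (where `π` sends `g_x` to `x` and `d` sends `g_x` to `1`) is surjective
and its kernel is contained in the center of `Ass(X)`; i.e.
`1 → K → Ass(X) → G × ℤ → 1` is a central extension. -/
theorem envelGroup_central_extension_of_perfect (G : Type) [Group G] (g₀ : G)
    (hperf : commutator G = ⊤)
    (hgen : Subgroup.closure {h | IsConj g₀ h} = ⊤)
    (π : Rack.EnvelGroup (ConjClassOf G g₀) →* G)
    (hπ : ∀ x : ConjClassOf G g₀, π (Rack.toEnvelGroup (ConjClassOf G g₀) x) = x.1)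
    (d : Rack.EnvelGroup (ConjClassOf G g₀) →* Multiplicative ℤ)
    (hd : ∀ x : ConjClassOf G g₀,
      d (Rack.toEnvelGroup (ConjClassOf G g₀) x) = Multiplicative.ofAdd 1) :
    Function.Surjective ⇑(π.prod d) ∧
      (π.prod d).ker ≤ Subgroup.center (Rack.EnvelGroup (ConjClassOf G g₀)) := by
  set R := ConjClassOf G g₀ with hR
  set gg := Rack.toEnvelGroup R with hgg
  -- π is surjective
  have hπsurj : Function.Surjective π := by
    have : (⊤ : Subgroup G) ≤ π.range := by
      rw [← hgen, Subgroup.closure_le]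
      intro h hh
      exact ⟨gg ⟨h, hh⟩, hπ _⟩
    intro a
    exact this (Subgroup.mem_top a)
  -- the key conjugation formula
  have hconj : ∀ a : Rack.EnvelGroup R, ∀ x : R,
      a * gg x * a⁻¹ = gg ⟨π a * x.1 * (π a)⁻¹, x.2.trans (isConj_iff.mpr ⟨π a, rfl⟩)⟩ := by
    intro a
    have ha : a ∈ Subgroup.closure (Set.range gg) := by
      rw [closure_range_toEnvelGroup]; trivial
    induction ha using Subgroup.closure_induction with
    | mem b hb =>
      obtain ⟨y, rfl⟩ := hb
      intro x
      have := (Rack.toEnvelGroup R).map_act (x := y) (y := x)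
      rw [Quandle.conj_act_eq_conj] at this
      rw [← this]
      congr 1
      apply Subtype.ext
      show y.1 * x.1 * y.1⁻¹ = π (gg y) * x.1 * (π (gg y))⁻¹
      rw [hπ]
    | one =>
      intro x
      simp only [one_mul, inv_one, mul_one, map_one]
      exact congrArg gg (Subtype.ext rfl)
    | mul b c _ _ hb hc =>
      intro x
      have : b * c * gg x * (b * c)⁻¹ = b * (c * gg x * c⁻¹) * b⁻¹ := by group
      rw [this, hc x]
      refine (hb _).trans ?_
      congr 1
      apply Subtype.ext
      show π b * (π c * x.1 * (π c)⁻¹) * (π b)⁻¹ = π (b * c) * x.1 * (π (b * c))⁻¹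
      rw [map_mul]; group
    | inv b _ hb =>
      intro x
      have key : b * gg ⟨(π b)⁻¹ * x.1 * π b,
          x.2.trans (isConj_iff.mpr ⟨(π b)⁻¹, by group⟩)⟩ * b⁻¹ = gg x := by
        rw [hb ⟨(π b)⁻¹ * x.1 * π b, x.2.trans (isConj_iff.mpr ⟨(π b)⁻¹, by group⟩)⟩]
        congr 1
        apply Subtype.ext
        show π b * ((π b)⁻¹ * x.1 * π b) * (π b)⁻¹ = x.1
        group
      have : b⁻¹ * gg x * b⁻¹⁻¹ =
          gg ⟨(π b)⁻¹ * x.1 * π b, x.2.trans (isConj_iff.mpr ⟨(π b)⁻¹, by group⟩)⟩ := by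
        rw [← key]; group
      rw [this]
      congr 1
      apply Subtype.ext
      show (π b)⁻¹ * x.1 * π b = π b⁻¹ * x.1 * (π b⁻¹)⁻¹
      rw [map_inv]; group
  constructor
  · -- surjectivity
    -- the subgroup of G of elements h with (h, 1) in the range
    set K : Subgroup G :=
      { carrier := {h : G | ((h, (1 : Multiplicative ℤ)) : G × Multiplicative ℤ) ∈ (π.prod d).range}
        one_mem' := by
          exact ⟨1, by simp⟩
        mul_mem' := by
          rintro a b ⟨s, hs⟩ ⟨t, ht⟩
          refine ⟨s * t, ?_⟩
          rw [map_mul, hs, ht]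
          simp
        inv_mem' := by
          rintro a ⟨s, hs⟩
          exact ⟨s⁻¹, by rw [map_inv, hs]; simp⟩ } with hK
    have hKtop : K = ⊤ := by
      rw [eq_top_iff, ← hperf]
      rw [commutator_def]
      rw [Subgroup.commutator_le]
      intro a _ b _
      obtain ⟨s, hs⟩ := hπsurj a
      obtain ⟨t, ht⟩ := hπsurj b
      refine ⟨⁅s, t⁆, ?_⟩
      rw [map_commutatorElement]
      have : (π.prod d) s = (a, d s) := by simp [MonoidHom.prod_apply, hs]
      have h2 : (π.prod d) t = (b, d t) := by simp [MonoidHom.prod_apply, ht]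
      rw [this, h2]
      have hz : ⁅d s, d t⁆ = 1 := commutatorElement_eq_one_iff_mul_comm.mpr (mul_comm _ _)
      show ((⁅a, b⁆, ⁅d s, d t⁆) : G × Multiplicative ℤ) = (⁅a, b⁆, 1)
      rw [hz]
    rintro ⟨h, n⟩
    -- (g₀^m, ofAdd m) is in the range
    have hg₀ : (π.prod d) (gg ⟨g₀, IsConj.refl g₀⟩) = (g₀, Multiplicative.ofAdd 1) := by
      simp [MonoidHom.prod_apply, hπ, hd]
      exact ⟨hπ _, hd _⟩
    set m : ℤ := Multiplicative.toAdd n with hm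
    have hpow : ((g₀, Multiplicative.ofAdd (1 : ℤ)) : G × Multiplicative ℤ) ^ m = (g₀ ^ m, n) := by
      rw [Prod.pow_def]
      congr 1
      rw [← ofAdd_zsmul]
      simp [hm]
    have h1 : ((g₀ ^ m, n) : G × Multiplicative ℤ) ∈ (π.prod d).range := by
      rw [← hpow]
      exact zpow_mem (MonoidHom.mem_range.mpr ⟨gg ⟨g₀, IsConj.refl g₀⟩, hg₀⟩) m
    have h2 : ((h * (g₀ ^ m)⁻¹, (1 : Multiplicative ℤ)) : G × Multiplicative ℤ) ∈
        (π.prod d).range := by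
      have : h * (g₀ ^ m)⁻¹ ∈ K := by rw [hKtop]; trivial
      exact this
    have := mul_mem h2 h1
    simp only [Prod.mk_mul_mk, one_mul, inv_mul_cancel_right] at this
    obtain ⟨s, hs⟩ := this
    exact ⟨s, hs⟩
  · -- kernel is central
    intro k hk
    rw [MonoidHom.mem_ker] at hk
    have hπk : π k = 1 := congrArg Prod.fst hk
    rw [Subgroup.mem_center_iff]
    have hcent : (⊤ : Subgroup (Rack.EnvelGroup R)) ≤ Subgroup.centralizer {k} := by
      rw [← closure_range_toEnvelGroup R, Subgroup.closure_le]
      rintro a ⟨x, rfl⟩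
      rw [SetLike.mem_coe, Subgroup.mem_centralizer_iff]
      intro s hs
      rw [show s = k from hs]
      -- k * gg x = gg x * k
      have this : k * gg x * k⁻¹ = gg x := by
        rw [hconj k x]
        congr 1
        apply Subtype.ext
        show π k * x.1 * (π k)⁻¹ = x.1
        rw [hπk]; group
      calc k * gg x = k * gg x * k⁻¹ * k := by group
        _ = gg x * k := by rw [this]
    intro a
    have ha := hcent (Subgroup.mem_top a)
    rw [Subgroup.mem_centralizer_iff] at ha
    exact (ha k rfl).symm
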